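/- arXiv:2407.13743 — 4 statements merged into one kernel-verified Lean document; each statement's English description precedes it below -/
import Mathlib

section
/- The Bellman operator L with discount factor 1 is a non-expansion in the span seminorm: for any two vectors v₁, v₂ ∈ ℝ^S, span(L v₁ − L v₂) ≤ span(v₁ − v₂). -/
open scoped BigOperators

/-- The span seminorm: `span v = max_s v s - min_s v s`. -/
noncomputable def span {S : Type*} [Fintype S] [Nonempty S] (v : S → ℝ) : ℝ :=
  (⨆ s, v s) - ⨅ s, v s

/-- The Bellman operator with discount factor 1:
`(L v) s = max_a (R s a + ∑ s', P s a s' * v s')`. -/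
noncomputable def bellman {S A : Type*} [Fintype S] [Fintype A] [Nonempty A]
    (R : S → A → ℝ) (P : S → A → S → ℝ) (v : S → ℝ) : S → ℝ :=
  fun s => ⨆ a, (R s a + ∑ s', P s a s' * v s')

/-- The Bellman operator with discount factor 1 is a non-expansion in the span
seminorm: `span (L v₁ - L v₂) ≤ span (v₁ - v₂)`. -/
theorem bellman_span_nonexpansive {S A : Type*} [Fintype S] [Nonempty S] [Fintype A] [Nonempty A]
    (R : S → A → ℝ) (P : S → A → S → ℝ)
    (hP0 : ∀ s a s', 0 ≤ P s a s') (hP1 : ∀ s a, ∑ s', P s a s' = 1)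
    (v₁ v₂ : S → ℝ) :
    span (fun s => bellman R P v₁ s - bellman R P v₂ s) ≤ span (fun s => v₁ s - v₂ s) := by
  set M : ℝ := ⨆ s, (v₁ s - v₂ s) with hM
  set m : ℝ := ⨅ s, (v₁ s - v₂ s) with hm
  have hbddA : ∀ (f : A → ℝ), BddAbove (Set.range f) := fun f =>
    (Set.finite_range f).bddAbove
  have hbddS : ∀ (f : S → ℝ), BddAbove (Set.range f) := fun f =>
    (Set.finite_range f).bddAbove
  have hbddSb : ∀ (f : S → ℝ), BddBelow (Set.range f) := fun f =>
    (Set.finite_range f).bddBelow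
  have hleM : ∀ s, v₁ s - v₂ s ≤ M := fun s => le_ciSup (hbddS (fun s => v₁ s - v₂ s)) s
  have hmle : ∀ s, m ≤ v₁ s - v₂ s := fun s => ciInf_le (hbddSb (fun s => v₁ s - v₂ s)) s
  -- key pointwise bounds
  have key : ∀ s, m ≤ bellman R P v₁ s - bellman R P v₂ s ∧
      bellman R P v₁ s - bellman R P v₂ s ≤ M := by
    intro s
    have hdiff : ∀ a, (R s a + ∑ s', P s a s' * v₁ s')
        - (R s a + ∑ s', P s a s' * v₂ s') = ∑ s', P s a s' * (v₁ s' - v₂ s') := by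
      intro a
      simp only [mul_sub, Finset.sum_sub_distrib]
      ring
    have hub : ∀ a, (∑ s', P s a s' * (v₁ s' - v₂ s')) ≤ M := by
      intro a
      calc ∑ s', P s a s' * (v₁ s' - v₂ s') ≤ ∑ s', P s a s' * M := by
            apply Finset.sum_le_sum
            intro i _
            exact mul_le_mul_of_nonneg_left (hleM i) (hP0 s a i)
        _ = M := by rw [← Finset.sum_mul, hP1 s a, one_mul]
    have hlb : ∀ a, m ≤ ∑ s', P s a s' * (v₁ s' - v₂ s') := by
      intro a
      calc m = ∑ s', P s a s' * m := by rw [← Finset.sum_mul, hP1 s a, one_mul]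
        _ ≤ ∑ s', P s a s' * (v₁ s' - v₂ s') := by
            apply Finset.sum_le_sum
            intro i _
            exact mul_le_mul_of_nonneg_left (hmle i) (hP0 s a i)
    constructor
    · -- bellman v₂ s ≤ bellman v₁ s - m
      have : bellman R P v₂ s ≤ bellman R P v₁ s - m := by
        apply ciSup_le
        intro a
        have h1 : (R s a + ∑ s', P s a s' * v₂ s')
            ≤ (R s a + ∑ s', P s a s' * v₁ s') - m := by
          have := hlb a
          have := hdiff a
          linarith
        exact h1.trans (by
          have : (R s a + ∑ s', P s a s' * v₁ s') ≤ bellman R P v₁ s :=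
            le_ciSup (hbddA (fun a => R s a + ∑ s', P s a s' * v₁ s')) a
          linarith)
      linarith
    · have : bellman R P v₁ s ≤ bellman R P v₂ s + M := by
        apply ciSup_le
        intro a
        have h1 : (R s a + ∑ s', P s a s' * v₁ s')
            ≤ (R s a + ∑ s', P s a s' * v₂ s') + M := by
          have := hub a
          have := hdiff a
          linarith
        exact h1.trans (by
          have : (R s a + ∑ s', P s a s' * v₂ s') ≤ bellman R P v₂ s :=
            le_ciSup (hbddA (fun a => R s a + ∑ s', P s a s' * v₂ s')) a
          linarith)
      linarith
  unfold span
  have h1 : (⨆ s, (bellman R P v₁ s - bellman R P v₂ s)) ≤ M :=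
    ciSup_le fun s => (key s).2
  have h2 : m ≤ ⨅ s, (bellman R P v₁ s - bellman R P v₂ s) :=
    le_ciInf fun s => (key s).1
  linarith
end

section
/- For the learning rates α_n = (C+1)/(C+n) and their products α_n^i := α_i·∏_{j=i+1}^n (1−α_j), the following holds: 1/√n ≤ Σ_{i=1}^n α_n^i/√i ≤ 2/√n for every n ≥ 1 and every integer C ≥ 1. -/
open scoped BigOperators

/-- The learning rate `α_n = (C+1)/(C+n)`. -/
noncomputable def lr (C n : ℕ) : ℝ := ((C : ℝ) + 1) / ((C : ℝ) + n)

/-- The weight `α_n^i = α_i · ∏_{j=i+1}^n (1 − α_j)`. -/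
noncomputable def lrw (C n i : ℕ) : ℝ := lr C i * ∏ j ∈ Finset.Icc (i + 1) n, (1 - lr C j)

lemma lrw_sum_succ (C n : ℕ) :
    ∑ i ∈ Finset.Icc 1 (n+1), lrw C (n+1) i / Real.sqrt i
      = (1 - lr C (n+1)) * ∑ i ∈ Finset.Icc 1 n, lrw C n i / Real.sqrt i
        + lr C (n+1) / Real.sqrt ((n:ℝ)+1) := by
  rw [Finset.sum_Icc_succ_top (by omega : 1 ≤ n + 1)]
  have h1 : lrw C (n+1) (n+1) = lr C (n+1) := by
    simp [lrw]
  rw [h1, Finset.mul_sum]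
  push_cast
  congr 1
  apply Finset.sum_congr rfl
  intro i hi
  have hi' : i + 1 ≤ n + 1 := by
    simp only [Finset.mem_Icc] at hi; omega
  rw [lrw, lrw, Finset.prod_Icc_succ_top hi']
  ring

/-- For the learning rates `α_n = (C+1)/(C+n)` and weights
`α_n^i = α_i ∏_{j=i+1}^n (1−α_j)`, we have `1/√n ≤ ∑_{i=1}^n α_n^i/√i ≤ 2/√n`. -/
theorem lrw_sqrt_bounds (C : ℕ) (hC : 1 ≤ C) (n : ℕ) (hn : 1 ≤ n) :
    1 / Real.sqrt n ≤ ∑ i ∈ Finset.Icc 1 n, lrw C n i / Real.sqrt i ∧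
    ∑ i ∈ Finset.Icc 1 n, lrw C n i / Real.sqrt i ≤ 2 / Real.sqrt n := by
  induction n, hn using Nat.le_induction with
  | base =>
    have hC0 : ((C : ℝ) + 1) ≠ 0 := by positivity
    simp [lrw, lr, Real.sqrt_one, div_self hC0]
  | succ n hn ih =>
    obtain ⟨ih1, ih2⟩ := ih
    rw [lrw_sum_succ]
    push_cast
    set s := Real.sqrt n with hs_def
    set t := Real.sqrt ((n:ℝ)+1) with ht_def
    have hs0 : 0 < s := Real.sqrt_pos.mpr (by positivity)
    have ht0 : 0 < t := Real.sqrt_pos.mpr (by positivity)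
    have hs : s * s = n := Real.mul_self_sqrt (by positivity)
    have ht : t * t = n + 1 := Real.mul_self_sqrt (by positivity)
    have hst : s ≤ t := Real.sqrt_le_sqrt (by linarith)
    have hD : (0:ℝ) < (C:ℝ) + n + 1 := by positivity
    have ha : lr C (n+1) = ((C:ℝ) + 1) / ((C:ℝ) + n + 1) := by
      rw [lr]; push_cast; ring_nf
    have h1a : 1 - lr C (n+1) = (n : ℝ) / ((C:ℝ) + n + 1) := by
      rw [ha]; field_simp; ring
    set S := ∑ i ∈ Finset.Icc 1 n, lrw C n i / Real.sqrt i with hS_def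
    rw [h1a, ha]
    have hfrac : (0:ℝ) ≤ (n : ℝ) / ((C:ℝ) + n + 1) := by positivity
    have hstt : s * t ≤ (n:ℝ) + 1 := by
      nlinarith [mul_le_mul_of_nonneg_right hst ht0.le]
    have h2st : 2 * (s * t) ≤ 2 * (n:ℝ) + 1 := by nlinarith [sq_nonneg (s - t)]
    constructor
    · have heq : (n : ℝ) / ((C:ℝ) + n + 1) * (1 / s) + ((C:ℝ) + 1) / ((C:ℝ) + n + 1) / t
          = ((n:ℝ) * t + ((C:ℝ)+1) * s) / (((C:ℝ) + n + 1) * s * t) := by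
        field_simp
      have hlow : 1 / t ≤ (n : ℝ) / ((C:ℝ) + n + 1) * (1 / s)
          + ((C:ℝ) + 1) / ((C:ℝ) + n + 1) / t := by
        rw [heq, div_le_div_iff₀ ht0 (by positivity)]
        nlinarith [mul_le_mul_of_nonneg_left hstt (Nat.cast_nonneg n : (0:ℝ) ≤ n),
          mul_pos hs0 ht0]
      have hmono : (n : ℝ) / ((C:ℝ) + n + 1) * (1 / s)
          ≤ (n : ℝ) / ((C:ℝ) + n + 1) * S := mul_le_mul_of_nonneg_left ih1 hfrac
      linarith
    · have heq : (n : ℝ) / ((C:ℝ) + n + 1) * (2 / s) + ((C:ℝ) + 1) / ((C:ℝ) + n + 1) / t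
          = (2 * (n:ℝ) * t + ((C:ℝ)+1) * s) / (((C:ℝ) + n + 1) * s * t) := by
        field_simp
      have hup : (n : ℝ) / ((C:ℝ) + n + 1) * (2 / s)
          + ((C:ℝ) + 1) / ((C:ℝ) + n + 1) / t ≤ 2 / t := by
        rw [heq, div_le_div_iff₀ (by positivity) ht0]
        nlinarith [mul_le_mul_of_nonneg_right h2st (mul_pos hs0 ht0).le,
          mul_nonneg (Nat.cast_nonneg C : (0:ℝ) ≤ C) (mul_pos hs0 ht0).le,
          mul_pos hs0 ht0]
      have hmono : (n : ℝ) / ((C:ℝ) + n + 1) * S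
          ≤ (n : ℝ) / ((C:ℝ) + n + 1) * (2 / s) := mul_le_mul_of_nonneg_left ih2 hfrac
      linarith
end

section
/- For the learning rates α_n = (C+1)/(C+n) and products α_n^i := α_i·∏_{j=i+1}^n (1−α_j): max_{1≤i≤n} α_n^i ≤ 2C/n and Σ_{i=1}^n (α_n^i)² ≤ 2C/n for every n ≥ 1. -/
open scoped BigOperators

lemma lr_nonneg (C j : ℕ) : 0 ≤ lr C j := by
  apply div_nonneg <;> positivity

lemma lr_le_one (C j : ℕ) (hj : 1 ≤ j) : lr C j ≤ 1 := by
  have hj' : (1:ℝ) ≤ (j:ℝ) := by exact_mod_cast hj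
  rw [lr, div_le_one (by positivity)]
  linarith

lemma lrw_nonneg (C n i : ℕ) (hi : 1 ≤ i) : 0 ≤ lrw C n i := by
  apply mul_nonneg (lr_nonneg C i)
  apply Finset.prod_nonneg
  intro j hj
  have h := (Finset.mem_Icc.mp hj).1
  have : 1 ≤ j := le_trans (Nat.le_succ_of_le hi) h
  linarith [lr_le_one C j this]

lemma lrw_step (C n i : ℕ) (h : i ≤ n) :
    lrw C (n+1) i = lrw C n i * (1 - lr C (n+1)) := by
  rw [lrw, lrw, Finset.prod_Icc_succ_top (by omega : i + 1 ≤ n + 1)]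
  ring

lemma lrw_self (C n : ℕ) : lrw C n n = lr C n := by
  rw [lrw, Finset.Icc_eq_empty (by omega), Finset.prod_empty, mul_one]

lemma lr_step (C n : ℕ) (hn : 1 ≤ n) : lr C n * (1 - lr C (n+1)) ≤ lr C (n+1) := by
  have hn' : (1:ℝ) ≤ (n:ℝ) := by exact_mod_cast hn
  rw [lr, lr]
  push_cast
  rw [div_mul_eq_mul_div, div_le_div_iff₀ (by positivity) (by positivity)]
  have hC : (0:ℝ) ≤ (C:ℝ) := by positivity
  have h1 : (1:ℝ) - ((C:ℝ)+1)/((C:ℝ)+(n+1)) = (n:ℝ)/((C:ℝ)+(n+1)) := by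
    field_simp
    ring
  rw [h1, mul_assoc, div_mul_cancel₀ _ (by positivity : ((C:ℝ)+((n:ℝ)+1)) ≠ 0)]
  nlinarith

lemma lrw_le_lr (C i : ℕ) (hi : 1 ≤ i) : ∀ n, i ≤ n → lrw C n i ≤ lr C n := by
  intro n
  induction n with
  | zero => intro h; omega
  | succ n ih =>
    intro h
    rcases Nat.lt_or_ge n i with h1 | h1
    · have : i = n + 1 := by omega
      subst this
      rw [lrw_self]
    · rw [lrw_step C n i h1]
      have hnn : 1 ≤ n := le_trans hi h1
      have h2 : (0:ℝ) ≤ 1 - lr C (n+1) := by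
        linarith [lr_le_one C (n+1) (by omega)]
      calc lrw C n i * (1 - lr C (n+1)) ≤ lr C n * (1 - lr C (n+1)) :=
            mul_le_mul_of_nonneg_right (ih h1) h2
        _ ≤ lr C (n+1) := lr_step C n hnn

lemma sum_lrw (C : ℕ) : ∀ n, 1 ≤ n → ∑ i ∈ Finset.Icc 1 n, lrw C n i = 1 := by
  intro n
  induction n with
  | zero => intro h; omega
  | succ n ih =>
    intro _
    rcases Nat.eq_zero_or_pos n with h0 | h0
    · subst h0
      simp only [Finset.Icc_self, Finset.sum_singleton, lrw_self, lr]
      norm_num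
      exact (by positivity : ((C:ℝ)+1) ≠ 0)
    · rw [Finset.sum_Icc_succ_top (by omega : 1 ≤ n + 1), lrw_self]
      have : ∑ i ∈ Finset.Icc 1 n, lrw C (n+1) i
          = (∑ i ∈ Finset.Icc 1 n, lrw C n i) * (1 - lr C (n+1)) := by
        rw [Finset.sum_mul]
        apply Finset.sum_congr rfl
        intro i hi
        exact lrw_step C n i (Finset.mem_Icc.mp hi).2
      rw [this, ih h0]
      ring

lemma lr_le_bound (C : ℕ) (hC : 1 ≤ C) (n : ℕ) (hn : 1 ≤ n) :
    lr C n ≤ 2 * (C : ℝ) / n := by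
  have hC' : (1:ℝ) ≤ (C:ℝ) := by exact_mod_cast hC
  have hn' : (1:ℝ) ≤ (n:ℝ) := by exact_mod_cast hn
  rw [lr, div_le_div_iff₀ (by positivity) (by positivity)]
  nlinarith

/-- `max_{1≤i≤n} α_n^i ≤ 2C/n` and `∑_{i=1}^n (α_n^i)² ≤ 2C/n`. -/
theorem lrw_max_and_sq_bounds (C : ℕ) (hC : 1 ≤ C) (n : ℕ) (hn : 1 ≤ n) :
    (∀ i ∈ Finset.Icc 1 n, lrw C n i ≤ 2 * (C : ℝ) / n) ∧
    ∑ i ∈ Finset.Icc 1 n, (lrw C n i) ^ 2 ≤ 2 * (C : ℝ) / n := by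
  have hmax : ∀ i ∈ Finset.Icc 1 n, lrw C n i ≤ 2 * (C : ℝ) / n := by
    intro i hi
    obtain ⟨h1, h2⟩ := Finset.mem_Icc.mp hi
    exact le_trans (lrw_le_lr C i h1 n h2) (lr_le_bound C hC n hn)
  refine ⟨hmax, ?_⟩
  calc ∑ i ∈ Finset.Icc 1 n, (lrw C n i) ^ 2
      ≤ ∑ i ∈ Finset.Icc 1 n, lrw C n i * (2 * (C : ℝ) / n) := by
        apply Finset.sum_le_sum
        intro i hi
        have h1 := (Finset.mem_Icc.mp hi).1
        rw [sq]
        exact mul_le_mul_of_nonneg_left (hmax i hi) (lrw_nonneg C n i h1)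
    _ = (∑ i ∈ Finset.Icc 1 n, lrw C n i) * (2 * (C : ℝ) / n) := by
        rw [Finset.sum_mul]
    _ = 2 * (C : ℝ) / n := by rw [sum_lrw C n hn, one_mul]
end

section
/- If the expected hitting time of s₀ is at most H from every state under a stationary policy π, then the n-step values satisfy |J_n^π(s) − J_n^π(s₀)| ≤ H for all states s and all n, where rewards lie in [0,1]. -/
open scoped BigOperators

/-- For a Markov chain induced by a stationary policy (transition matrix `P`,
per-step rewards `r ∈ [0,1]`), if the expected hitting time `t` of state `s₀` satisfies
`t s ≤ H` for every state `s` (where `t s₀ = 0` and `t s = 1 + ∑ s' P s s' t s'` for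
`s ≠ s₀`), then the `n`-step values `J_n` satisfy `|J_n s − J_n s₀| ≤ H` for all `s, n`. -/
theorem nstep_value_close_to_frequent_state {S : Type*} [Fintype S] [Nonempty S] [DecidableEq S]
    (P : S → S → ℝ) (hP0 : ∀ s s', 0 ≤ P s s') (hP1 : ∀ s, ∑ s', P s s' = 1)
    (r : S → ℝ) (hr0 : ∀ s, 0 ≤ r s) (hr1 : ∀ s, r s ≤ 1)
    (J : ℕ → S → ℝ) (hJ0 : ∀ s, J 0 s = 0)
    (hJ : ∀ n s, J (n + 1) s = r s + ∑ s', P s s' * J n s')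
    (s₀ : S) (H : ℝ) (t : S → ℝ) (ht0 : ∀ s, 0 ≤ t s) (hts₀ : t s₀ = 0)
    (ht : ∀ s, s ≠ s₀ → t s = 1 + ∑ s', P s s' * t s') (htH : ∀ s, t s ≤ H) :
    ∀ (n : ℕ) (s : S), |J n s - J n s₀| ≤ H := by
  -- J increases by at most 1 per step
  have hstep : ∀ n s, J (n + 1) s ≤ J n s + 1 := by
    intro n
    induction n with
    | zero =>
      intro s
      have : J 1 s = r s := by simp [hJ, hJ0]
      rw [this, hJ0]
      linarith [hr1 s]
    | succ n ih =>
      intro s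
      rw [hJ (n + 1) s, hJ n s]
      have h1 : ∑ s', P s s' * J (n + 1) s' ≤ ∑ s', P s s' * (J n s' + 1) :=
        Finset.sum_le_sum fun s' _ => mul_le_mul_of_nonneg_left (ih s') (hP0 s s')
      have h2 : ∑ s', P s s' * (J n s' + 1) = (∑ s', P s s' * J n s') + 1 := by
        simp [mul_add, Finset.sum_add_distrib, hP1 s]
      linarith
  -- J is monotone in n
  have hmono : ∀ n s, J n s ≤ J (n + 1) s := by
    intro n
    induction n with
    | zero =>
      intro s
      have : J 1 s = r s := by simp [hJ, hJ0]
      rw [this, hJ0]; exact hr0 s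
    | succ n ih =>
      intro s
      rw [hJ (n + 1) s, hJ n s]
      have h1 : ∑ s', P s s' * J n s' ≤ ∑ s', P s s' * J (n + 1) s' :=
        Finset.sum_le_sum fun s' _ => mul_le_mul_of_nonneg_left (ih s') (hP0 s s')
      linarith
  -- key bound: |J n s - J n s₀| ≤ t s
  have key : ∀ n s, J n s ≤ J n s₀ + t s ∧ J n s₀ - t s ≤ J n s := by
    intro n
    induction n with
    | zero =>
      intro s
      constructor <;> simp [hJ0] <;> linarith [ht0 s]
    | succ n ih =>
      intro s
      by_cases hs : s = s₀
      · subst hs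
        constructor <;> linarith [ht0 s]
      · have hrec := ht s hs
        have hub : ∑ s', P s s' * J n s' ≤ ∑ s', P s s' * (J n s₀ + t s') :=
          Finset.sum_le_sum fun s' _ => mul_le_mul_of_nonneg_left (ih s').1 (hP0 s s')
        have hlb : ∑ s', P s s' * (J n s₀ - t s') ≤ ∑ s', P s s' * J n s' :=
          Finset.sum_le_sum fun s' _ => mul_le_mul_of_nonneg_left (ih s').2 (hP0 s s')
        have e1 : ∑ s', P s s' * (J n s₀ + t s')
            = J n s₀ + ∑ s', P s s' * t s' := by
          simp only [mul_add, Finset.sum_add_distrib, ← Finset.sum_mul, hP1 s, one_mul]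
        have e2 : ∑ s', P s s' * (J n s₀ - t s')
            = J n s₀ - ∑ s', P s s' * t s' := by
          simp only [mul_sub, Finset.sum_sub_distrib, ← Finset.sum_mul, hP1 s, one_mul]
        have hJ1 := hJ n s
        have hstep0 := hstep n s₀
        have hmono0 := hmono n s₀
        constructor
        · -- J (n+1) s ≤ r s + J n s₀ + ∑ P t = r s + J n s₀ + t s - 1 ≤ J (n+1) s₀ + t s
          have := hr1 s
          linarith
        · have := hr0 s
          linarith
  intro n s
  rw [abs_sub_le_iff]
  constructor <;> linarith [(key n s).1, (key n s).2, htH s, ht0 s]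
end
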